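/- arXiv:1107.0639 — 10 statements merged into one kernel-verified Lean document; each statement's English description precedes it below -/
import Mathlib

section
/- Let D, E, F be n×n complex matrices such that D and F are Hermitian positive semidefinite, E is Hermitian, and D+E is positive semidefinite. Then the matrices F(D+E)+I and FD+I are invertible and, in the Loewner order, (D+E)(F(D+E)+I)^{-1} ≤ D(FD+I)^{-1} + (DF+I)^{-1} E (FD+I)^{-1}. -/
/-!
Write `U = F D + 1`, `W = F (D + E) + 1` and `X = D + E`. For positive semidefinite `F` and `X`,
`F X + 1` is invertible since its determinant equals that of `√F X √F + 1 > 0`, and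
`W⁻¹ F = W⁻¹ (F X F + F) W⁻¹ᴴ` is positive semidefinite. With `φ X = X (F X + 1)⁻¹`, the smaller
side is `φ (D + E)` and the larger one is the tangent approximation `φ D + (D F + 1)⁻¹ E U⁻¹`; since
`Uᴴ = D F + 1`, the gap between them is exactly the congruence `(E U⁻¹)ᴴ (W⁻¹ F) (E U⁻¹)`.
-/

open ComplexOrder

open Matrix

namespace Matrix

variable {n : Type*} [Fintype n] [DecidableEq n]

section CommRing

variable {R : Type*} [CommRing R]

theorem isUnit_mul_add_one_comm {A B : Matrix n n R} (h : IsUnit (A * B + 1)) :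
    IsUnit (B * A + 1) := by
  rwa [isUnit_iff_isUnit_det, ← det_mul_add_one_comm, ← isUnit_iff_isUnit_det]

theorem mul_mul_add_one_inv_taylor_remainder {D E F : Matrix n n R}
    (hU : IsUnit (F * D + 1)) (hW : IsUnit (F * (D + E) + 1)) :
    D * (F * D + 1)⁻¹ + (D * F + 1)⁻¹ * E * (F * D + 1)⁻¹ - (D + E) * (F * (D + E) + 1)⁻¹
      = (D * F + 1)⁻¹ * E * ((F * (D + E) + 1)⁻¹ * F) * E * (F * D + 1)⁻¹ := by
  have hV := isUnit_mul_add_one_comm hU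
  rw [isUnit_iff_isUnit_det] at hU hV hW
  have hVX : (D * F + 1) * ((D + E) * (F * (D + E) + 1)⁻¹) = D + E * (F * (D + E) + 1)⁻¹ := by
    have hVX' : (D * F + 1) * (D + E) = D * (F * (D + E) + 1) + E := by noncomm_ring
    rw [← Matrix.mul_assoc, hVX', Matrix.add_mul, Matrix.mul_assoc, mul_nonsing_inv _ hW,
      Matrix.mul_one]
  have hWU : (F * (D + E) + 1)⁻¹ * (F * D + 1) = 1 - (F * (D + E) + 1)⁻¹ * F * E := by
    have hUW : F * D + 1 = (F * (D + E) + 1) - F * E := by noncomm_ring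
    rw [hUW, Matrix.mul_sub, nonsing_inv_mul _ hW, Matrix.mul_assoc]
  refine (isUnit_iff_isUnit_det _ |>.mpr hV).mul_left_cancel
    ((isUnit_iff_isUnit_det _ |>.mpr hU).mul_right_cancel ?_)
  calc (D * F + 1) * (D * (F * D + 1)⁻¹ + (D * F + 1)⁻¹ * E * (F * D + 1)⁻¹
          - (D + E) * (F * (D + E) + 1)⁻¹) * (F * D + 1)
      = (D * F + 1) * D * ((F * D + 1)⁻¹ * (F * D + 1))
          + (D * F + 1) * (D * F + 1)⁻¹ * E * ((F * D + 1)⁻¹ * (F * D + 1))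
          - ((D * F + 1) * ((D + E) * (F * (D + E) + 1)⁻¹)) * (F * D + 1) := by noncomm_ring
    _ = (D * F + 1) * D + E - (D * (F * D + 1) + E * ((F * (D + E) + 1)⁻¹ * (F * D + 1))) := by
        rw [nonsing_inv_mul _ hU, mul_nonsing_inv _ hV, hVX]; noncomm_ring
    _ = (D * F + 1) * ((D * F + 1)⁻¹ * E * ((F * (D + E) + 1)⁻¹ * F) * E * (F * D + 1)⁻¹)
          * (F * D + 1) := by
        rw [hWU]
        simp only [← Matrix.mul_assoc, mul_nonsing_inv _ hV, nonsing_inv_mul_cancel_right _ _ hU]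
        noncomm_ring

theorem IsHermitian.conjTranspose_mul_add_one [StarRing R] {A B : Matrix n n R}
    (hA : A.IsHermitian) (hB : B.IsHermitian) : (A * B + 1)ᴴ = B * A + 1 := by
  rw [conjTranspose_add, conjTranspose_mul, hA.eq, hB.eq, conjTranspose_one]

end CommRing

variable {𝕜 : Type*} [RCLike 𝕜]

open scoped MatrixOrder in
theorem PosSemidef.isUnit_mul_add_one {F X : Matrix n n 𝕜} (hF : F.PosSemidef)
    (hX : X.PosSemidef) : IsUnit (F * X + 1) := by
  obtain ⟨G, hG, rfl⟩ : ∃ G : Matrix n n 𝕜, G.PosSemidef ∧ G * G = F :=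
    ⟨CFC.sqrt F, (CFC.sqrt_nonneg F).posSemidef, CFC.sqrt_mul_sqrt_self F hF.nonneg⟩
  have hGXG : (G * X * G + 1).PosDef := by
    simpa only [hG.isHermitian.eq] using
      PosDef.posSemidef_add (hX.conjTranspose_mul_mul_same G) PosDef.one
  rw [isUnit_iff_isUnit_det, Matrix.mul_assoc, det_mul_add_one_comm, ← isUnit_iff_isUnit_det]
  exact hGXG.isUnit

theorem PosSemidef.nonsing_inv_mul_add_one_mul {F X : Matrix n n 𝕜} (hF : F.PosSemidef)
    (hX : X.PosSemidef) : ((F * X + 1)⁻¹ * F).PosSemidef := by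
  have hW := hF.isUnit_mul_add_one hX
  have hFW : (F * X * F + F).PosSemidef := by
    simpa only [hF.isHermitian.eq] using (hX.mul_mul_conjTranspose_same F).add hF
  have hcongr : (F * X + 1)⁻¹ * F = (F * X + 1)⁻¹ * (F * X * F + F) * (F * X + 1)⁻¹ᴴ := by
    have hV := (isUnit_iff_isUnit_det _).mp (isUnit_mul_add_one_comm hW)
    rw [conjTranspose_nonsing_inv, hF.isHermitian.conjTranspose_mul_add_one hX.isHermitian,
      show F * X * F + F = F * (X * F + 1) by noncomm_ring, ← Matrix.mul_assoc,
      mul_nonsing_inv_cancel_right _ _ hV]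
  rw [hcongr]
  exact hFW.mul_mul_conjTranspose_same _

end Matrix

/-- Let `D`, `E`, `F` be `n × n` complex matrices such that `D` and `F` are Hermitian positive
semidefinite, `E` is Hermitian, and `D + E` is positive semidefinite. Then `F (D + E) + I` and
`F D + I` are invertible and, in the Loewner order,
`(D + E) (F (D + E) + I)⁻¹ ≤ D (F D + I)⁻¹ + (D F + I)⁻¹ E (F D + I)⁻¹`. -/
theorem psd_resolvent_loewner_ineq (n : ℕ) (D E F : Matrix (Fin n) (Fin n) ℂ)
    (hD : D.PosSemidef) (hF : F.PosSemidef) (hE : E.IsHermitian) (hDE : (D + E).PosSemidef) :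
    IsUnit (F * (D + E) + 1) ∧ IsUnit (F * D + 1) ∧
      (D * (F * D + 1)⁻¹ + (D * F + 1)⁻¹ * E * (F * D + 1)⁻¹
        - (D + E) * (F * (D + E) + 1)⁻¹).PosSemidef := by
  have hU := hF.isUnit_mul_add_one hD
  have hW := hF.isUnit_mul_add_one hDE
  refine ⟨hW, hU, ?_⟩
  rw [mul_mul_add_one_inv_taylor_remainder hU hW]
  simpa only [conjTranspose_mul, conjTranspose_nonsing_inv, hE.eq, Matrix.mul_assoc,
    hF.isHermitian.conjTranspose_mul_add_one hD.isHermitian] using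
    (hF.nonsing_inv_mul_add_one_mul hDE).conjTranspose_mul_mul_same (E * (F * D + 1)⁻¹)
end

section
/- For every real number x, log(1 + e^{-x}) ≤ log 2 − x/2 + x²/8. -/
/-- For every real number `x`, `log (1 + e^{-x}) ≤ log 2 - x/2 + x²/8`. -/
theorem log_one_add_exp_neg_le (x : ℝ) :
    Real.log (1 + Real.exp (-x)) ≤ Real.log 2 - x / 2 + x ^ 2 / 8 := by
  have hkey : 1 + Real.exp (-x) = Real.exp (-x / 2) * (2 * Real.cosh (x / 2)) := by
    rw [Real.cosh_eq]
    rw [mul_div_cancel₀ _ (two_ne_zero (α:=ℝ)), mul_add, ← Real.exp_add, ← Real.exp_add]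
    norm_num
    rw [show -x/2 + x/2 = (0:ℝ) by ring, Real.exp_zero, show -x/2 + -(x/2) = -x by ring, add_comm]
  have hcosh : (0:ℝ) < Real.cosh (x / 2) := Real.cosh_pos _
  rw [hkey, Real.log_mul (Real.exp_ne_zero _) (by positivity), Real.log_exp,
    Real.log_mul two_ne_zero hcosh.ne']
  have h1 : Real.log (Real.cosh (x / 2)) ≤ x ^ 2 / 8 := by
    have := Real.log_le_log hcosh (Real.cosh_le_exp_half_sq (x / 2))
    rw [Real.log_exp] at this
    nlinarith [this]
  linarith
end

section
/- Define C_QPSK(ρ) = log 4 − √(2/π) ∫_{-∞}^{∞} e^{-y²/2} log(1 + e^{-2(ρ + √ρ · y)}) dy for ρ ≥ 0. Then for every ρ ≥ 0, C_QPSK(ρ) ≥ ρ − ρ². -/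
/-!
Write `Y` for a standard Gaussian. Then `ρ + √ρ · Y` has law `N(ρ, ρ)` and the normalising
constants combine to `√(2/π) · √(2π) = 2`, so `C_QPSK ρ = 2 log 2 − 2 𝔼[log (1 + e^{-2X})]`
with `X ~ N(ρ, ρ)`. Since `1 + e^{-2x} = 2 e^{-x} cosh x` and `cosh x ≤ e^{x²/2}`, the integrand
is at most the quadratic `log 2 − x + x²/2`, whose expectation only involves the first two
moments `𝔼 X = ρ` and `𝔼 X² = ρ + ρ²`.
-/

open MeasureTheory ProbabilityTheory Real NNReal

lemma log_one_add_exp_neg_two_mul_le (x : ℝ) :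
    log (1 + exp (-2 * x)) ≤ log 2 - x + x ^ 2 / 2 := by
  have h_eq : 1 + exp (-2 * x) = exp (-x) * (2 * cosh x) := by
    rw [cosh_eq, show exp (-x) * (2 * ((exp x + exp (-x)) / 2)) = exp (-x + x) + exp (-x + -x) by
      rw [exp_add, exp_add]; ring, neg_add_cancel, exp_zero]
    ring_nf
  have h_cosh : log (cosh x) ≤ x ^ 2 / 2 :=
    (log_le_log (cosh_pos x) (cosh_le_exp_half_sq x)).trans_eq (log_exp _)
  rw [h_eq, log_mul (exp_pos _).ne' (by positivity), log_exp,
    log_mul two_ne_zero (cosh_pos x).ne']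
  linarith

lemma log_one_add_exp_le_log_two_add_abs (t : ℝ) : log (1 + exp t) ≤ log 2 + |t| := by
  have h : 1 + exp t ≤ 2 * exp |t| := by
    linarith [exp_le_exp.2 (le_abs_self t), one_le_exp (abs_nonneg t)]
  calc log (1 + exp t) ≤ log (2 * exp |t|) := log_le_log (by positivity) h
    _ = log 2 + |t| := by rw [log_mul two_ne_zero (exp_pos _).ne', log_exp]

lemma continuous_log_one_add_exp : Continuous fun t : ℝ ↦ log (1 + exp t) :=
  (by fun_prop : Continuous fun t : ℝ ↦ 1 + exp t).log fun t ↦ by positivity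

lemma integrable_log_one_add_exp_comp {Ω : Type*} [MeasurableSpace Ω] {μ : Measure Ω}
    [IsFiniteMeasure μ] {X : Ω → ℝ} (hX : Integrable X μ) :
    Integrable (fun ω ↦ log (1 + exp (X ω))) μ := by
  have h_meas : AEStronglyMeasurable (fun ω ↦ log (1 + exp (X ω))) μ :=
    continuous_log_one_add_exp.comp_aestronglyMeasurable hX.aestronglyMeasurable
  refine ((integrable_const (log 2)).add hX.abs).mono' h_meas (ae_of_all _ fun ω ↦ ?_)
  rw [norm_eq_abs, abs_of_nonneg (log_nonneg (by linarith [exp_pos (X ω)]))]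
  exact log_one_add_exp_le_log_two_add_abs (X ω)

lemma integral_log_one_add_exp_neg_two_mul_le {Ω : Type*} [MeasurableSpace Ω] {μ : Measure Ω}
    [IsProbabilityMeasure μ] {X : Ω → ℝ} (hX : MemLp X 2 μ) :
    ∫ ω, log (1 + exp (-2 * X ω)) ∂μ ≤ log 2 - μ[X] + (∫ ω, X ω ^ 2 ∂μ) / 2 := by
  have hX₁ : Integrable X μ := hX.integrable one_le_two
  have hX₂ : Integrable (fun ω ↦ X ω ^ 2) μ := hX.integrable_sq
  calc ∫ ω, log (1 + exp (-2 * X ω)) ∂μ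
      ≤ ∫ ω, (log 2 - X ω + X ω ^ 2 / 2) ∂μ :=
        integral_mono (integrable_log_one_add_exp_comp (hX₁.const_mul (-2)))
          (((integrable_const _).sub hX₁).add (hX₂.div_const 2))
          fun ω ↦ log_one_add_exp_neg_two_mul_le (X ω)
    _ = log 2 - μ[X] + (∫ ω, X ω ^ 2 ∂μ) / 2 := by
        rw [integral_add (f := fun ω ↦ log 2 - X ω) ((integrable_const _).sub hX₁)
          (hX₂.div_const 2), integral_sub (integrable_const _) hX₁, integral_const, integral_div]
        simp only [probReal_univ, smul_eq_mul, one_mul]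

lemma integral_sq_gaussianReal (m : ℝ) (v : ℝ≥0) :
    ∫ x, x ^ 2 ∂gaussianReal m v = v + m ^ 2 := by
  have h := variance_eq_sub (memLp_id_gaussianReal (μ := m) (v := v) 2)
  rw [variance_id_gaussianReal] at h
  simp only [id, Pi.pow_apply, integral_id_gaussianReal] at h
  linarith

lemma integral_exp_neg_sq_div_two_mul (g : ℝ → ℝ) :
    ∫ y, exp (-y ^ 2 / 2) * g y = √(2 * π) * ∫ y, g y ∂gaussianReal 0 1 := by
  rw [integral_gaussianReal_eq_integral_smul one_ne_zero, ← integral_const_mul]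
  congr 1 with y
  have : √(2 * π) ≠ 0 := by positivity
  simp only [gaussianPDFReal, NNReal.coe_one, mul_one, sub_zero, smul_eq_mul]
  field_simp

lemma gaussianReal_map_const_add_sqrt_mul (m : ℝ) (v : ℝ≥0) :
    (gaussianReal 0 1).map (fun y ↦ m + √v * y) = gaussianReal m v := by
  have h : (fun y ↦ m + √v * y) = (m + ·) ∘ (√v * ·) := rfl
  rw [h, ← Measure.map_map (by fun_prop) (by fun_prop), gaussianReal_map_const_mul,
    gaussianReal_map_const_add]
  congr 1
  · simp only [mul_zero, zero_add]
  · ext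
    simp only [zero_le_coe, Real.sq_sqrt, mk_coe, mul_one]

/-- `C_QPSK ρ = log 4 − √(2/π) ∫ℝ e^{-y²/2} log (1 + e^{-2(ρ + √ρ · y)}) dy`, the achievable
mutual information for QPSK transmission over an AWGN channel with SNR `ρ`. -/
noncomputable def C_QPSK (ρ : ℝ) : ℝ :=
  Real.log 4 - Real.sqrt (2 / Real.pi) *
    ∫ y : ℝ, Real.exp (-y ^ 2 / 2) * Real.log (1 + Real.exp (-2 * (ρ + Real.sqrt ρ * y)))

lemma C_QPSK_eq_log_four_sub_integral_gaussianReal (ρ : ℝ≥0) :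
    C_QPSK ρ = log 4 - 2 * ∫ x, log (1 + exp (-2 * x)) ∂gaussianReal ρ ρ := by
  have h_const : √(2 / π) * √(2 * π) = 2 := by
    rw [← Real.sqrt_mul (by positivity), show 2 / π * (2 * π) = 2 ^ 2 by field_simp,
      sqrt_sq zero_le_two]
  rw [C_QPSK, integral_exp_neg_sq_div_two_mul (fun y ↦ log (1 + exp (-2 * (ρ + √ρ * y)))),
    ← gaussianReal_map_const_add_sqrt_mul (ρ : ℝ) ρ, integral_map (by fun_prop)
      (f := fun x ↦ log (1 + exp (-2 * x)))
      (continuous_log_one_add_exp.comp (continuous_const_mul (-2))).aestronglyMeasurable,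
    ← mul_assoc, h_const]

/-- For every `ρ ≥ 0`, `C_QPSK ρ ≥ ρ − ρ²`. -/
theorem C_QPSK_ge_sub_sq (ρ : ℝ) (hρ : 0 ≤ ρ) : ρ - ρ ^ 2 ≤ C_QPSK ρ := by
  lift ρ to ℝ≥0 using hρ
  have h := integral_log_one_add_exp_neg_two_mul_le (memLp_id_gaussianReal (μ := ρ) (v := ρ) 2)
  simp only [id, integral_id_gaussianReal, integral_sq_gaussianReal] at h
  have h_log4 : log 4 = 2 * log 2 := by
    rw [show (4 : ℝ) = 2 ^ 2 by norm_num, log_pow, Nat.cast_ofNat]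
  rw [C_QPSK_eq_log_four_sub_integral_gaussianReal, h_log4]
  linarith
end

section
/- Let M be an n×n Hermitian positive definite complex matrix, B an n×m complex matrix, i an index in {0,…,n−1}, and E_i = e_i e_i† the matrix with a single 1 in position (i,i). Then for all s, t ≥ 0, in the Loewner order, B† (M + ((s+t)/2) E_i)^{-1} B ≤ (1/2) ( B† (M + s E_i)^{-1} B + B† (M + t E_i)^{-1} B ); that is, the matrix-valued map t ↦ B† (M + t E_i)^{-1} B is midpoint-convex on [0,∞). -/
/-!
Inversion is operator convex on positive definite matrices (a C⋆-algebra fact), and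
`t ↦ M + t E_i` is affine with positive definite values on `[0, ∞)`, so `t ↦ (M + t E_i)⁻¹`
is convex there. Congruence `X ↦ Bᴴ X B` is linear and preserves the Loewner order, so it keeps
convexity; midpoint convexity is the case of weights `1/2, 1/2`.
-/

open ComplexOrder Matrix

open scoped MatrixOrder

namespace Matrix

variable {n : Type*} [Fintype n] [DecidableEq n]

omit [Fintype n] in
theorem posSemidef_single {𝕜 : Type*} [RCLike 𝕜] (i : n) {r : 𝕜} (hr : 0 ≤ r) :
    (single i i r).PosSemidef :=
  diagonal_single i r ▸ PosSemidef.diagonal (Pi.single_nonneg.2 hr)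

theorem convexOn_inv_posDef : ConvexOn ℝ {A : Matrix n n ℂ | A.PosDef} Inv.inv := by
  have hinv : (Inv.inv : Matrix n n ℂ → _) = Ring.inverse := funext nonsing_inv_eq_ringInverse
  open scoped Matrix.Norms.L2Operator in
  simpa only [hinv, isStrictlyPositive_iff_posDef] using
    CStarAlgebra.convexOn_ringInverse (A := Matrix n n ℂ)

theorem convexOn_inv_add_smul {M E : Matrix n n ℂ} (hM : M.PosDef) (hE : E.PosSemidef) :
    ConvexOn ℝ (Set.Ici 0) fun t : ℝ => (M + (t : ℂ) • E)⁻¹ := by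
  have hpos {t : ℝ} (ht : 0 ≤ t) : (M + (t : ℂ) • E).PosDef :=
    hM.add_posSemidef (hE.smul (by exact_mod_cast ht))
  refine ⟨convex_Ici 0, fun x hx y hy a b ha hb hab => ?_⟩
  have hcomb : M + ((a • x + b • y : ℝ) : ℂ) • E
      = a • (M + (x : ℂ) • E) + b • (M + (y : ℂ) • E) := by
    ext i j
    simp only [add_apply, smul_apply, Complex.real_smul, Complex.ofReal_add, Complex.ofReal_mul,
      smul_eq_mul]
    linear_combination (-M i j) * (by exact_mod_cast hab : (a : ℂ) + b = 1)
  simp only [hcomb]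
  exact convexOn_inv_posDef.2 (hpos hx) (hpos hy) ha hb hab

end Matrix

theorem ConvexOn.conjTranspose_mul_mul {𝕜 E : Type*} [RCLike 𝕜] [AddCommMonoid E]
    [Module ℝ E] {m n : Type*} [Fintype m] [Fintype n] {s : Set E} {f : E → Matrix n n 𝕜}
    (hf : ConvexOn ℝ s f) (B : Matrix n m 𝕜) : ConvexOn ℝ s fun x => Bᴴ * f x * B := by
  refine ⟨hf.1, fun x hx y hy a b ha hb hab => ?_⟩
  have hcongr := (hf.2 hx hy ha hb hab).conjTranspose_mul_mul_same B
  rw [le_iff]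
  convert hcongr using 1
  simp only [Matrix.mul_sub, Matrix.sub_mul, Matrix.mul_add, Matrix.add_mul, Matrix.mul_smul,
    Matrix.smul_mul]

/-- Let `M` be an `n × n` Hermitian positive definite complex matrix, `B` an `n × m` complex
matrix, `i` an index, and `E_i = eᵢ eᵢ†`.  Then for all `s, t ≥ 0`, in the Loewner order,
`B† (M + ((s+t)/2) E_i)⁻¹ B ≤ (1/2) (B† (M + s E_i)⁻¹ B + B† (M + t E_i)⁻¹ B)`;
i.e. `t ↦ B† (M + t E_i)⁻¹ B` is midpoint-convex on `[0, ∞)`. -/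
theorem quadratic_form_resolvent_midpoint_convex (n m : ℕ)
    (M : Matrix (Fin n) (Fin n) ℂ) (hM : M.PosDef)
    (B : Matrix (Fin n) (Fin m) ℂ) (i : Fin n) (s t : ℝ) (hs : 0 ≤ s) (ht : 0 ≤ t) :
    ((1 / 2 : ℂ) • (Bᴴ * (M + (s : ℂ) • Matrix.single i i 1)⁻¹ * B
        + Bᴴ * (M + (t : ℂ) • Matrix.single i i 1)⁻¹ * B)
      - Bᴴ * (M + (((s + t) / 2 : ℝ) : ℂ) • Matrix.single i i 1)⁻¹ * B).PosSemidef := by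
  have hconvex :=
    (convexOn_inv_add_smul hM (posSemidef_single i zero_le_one)).conjTranspose_mul_mul B
  have hhalf : (0 : ℝ) ≤ 1 / 2 := by norm_num
  have hmidpoint := hconvex.2 hs ht hhalf hhalf (by norm_num)
  have hmean : (1 / 2 : ℝ) • s + (1 / 2 : ℝ) • t = (s + t) / 2 := by
    simp only [smul_eq_mul]; ring
  rw [le_iff, hmean, ← smul_add] at hmidpoint
  rwa [show (1 / 2 : ℂ) = ((1 / 2 : ℝ) : ℂ) by norm_num, Complex.coe_smul]
end

section
/- For all real numbers a > 0 and b > 0, the function f(ε) = ∫_0^∞ e^{-t} log(1 + a(b − ε)t/(1 + aε)) dt is convex on the interval [0, b]. -/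
open MeasureTheory Real Set Filter Topology

/-!
Integrating by parts and substituting `t = (a⁻¹ + ε) w` gives
`f ε = ∫_0^∞ (b - ε) e^{-(a⁻¹ + ε) w} / (1 + (b - ε) w) dw`.
For fixed `w > 0` the integrand is `e^{-(a⁻¹ + b) w} / w · φ ((b - ε) w)` with
`φ y = y e^y / (1 + y)`, and `φ'' y = e^y (y³ + 2y² + 3y) / (1 + y)³ ≥ 0` on `[0, ∞)`.
So the integrand is convex in `ε`, and convexity passes to the integral.
-/

theorem ConvexOn.integral {α E : Type*} [MeasurableSpace α] {μ : Measure α}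
    [AddCommMonoid E] [SMul ℝ E] {s : Set E} {K : E → α → ℝ}
    (hs : Convex ℝ s) (hK : ∀ᵐ w ∂μ, ConvexOn ℝ s (K · w))
    (hint : ∀ x ∈ s, Integrable (K x) μ) :
    ConvexOn ℝ s fun x => ∫ w, K x w ∂μ := by
  refine ⟨hs, fun x hx y hy p q hp hq hpq => ?_⟩
  have hpx := (hint x hx).const_mul p
  have hqy := (hint y hy).const_mul q
  calc ∫ w, K (p • x + q • y) w ∂μ ≤ ∫ w, (p * K x w + q * K y w) ∂μ :=
        integral_mono_ae (hint _ (hs hx hy hp hq hpq)) (hpx.add hqy)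
          (hK.mono fun w hw => hw.2 hx hy hp hq hpq)
    _ = p • ∫ w, K x w ∂μ + q • ∫ w, K y w ∂μ := by
        rw [integral_add hpx hqy, integral_const_mul, integral_const_mul, smul_eq_mul,
          smul_eq_mul]

lemma convexOn_mul_exp_div_one_add : ConvexOn ℝ (Ici 0) fun y => y * exp y / (1 + y) := by
  have hφ' : ∀ y : ℝ, 0 < 1 + y → HasDerivAt (fun y => y * exp y / (1 + y))
      (exp y * (y ^ 2 + y + 1) / (1 + y) ^ 2) y := fun y hy => by
    refine (((hasDerivAt_id y).mul (hasDerivAt_exp y)).div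
      ((hasDerivAt_id y).const_add 1) hy.ne').congr_deriv ?_
    simp only [id, Pi.mul_apply]
    field_simp
    ring
  have hφ'' : ∀ y : ℝ, 0 < 1 + y →
      HasDerivAt (fun y => exp y * (y ^ 2 + y + 1) / (1 + y) ^ 2)
        (exp y * (y ^ 3 + 2 * y ^ 2 + 3 * y) / (1 + y) ^ 3) y := fun y hy => by
    have hnum := (hasDerivAt_exp y).mul
      (((hasDerivAt_pow 2 y).add (hasDerivAt_id y)).add_const 1)
    refine (hnum.div (((hasDerivAt_id y).const_add 1).pow 2)
      (pow_ne_zero 2 hy.ne')).congr_deriv ?_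
    simp only [id, Pi.mul_apply, Pi.add_apply, Pi.pow_apply]
    field_simp
    ring
  refine convexOn_of_hasDerivWithinAt2_nonneg (convex_Ici 0) ?_
    (fun y hy => (hφ' y ?_).hasDerivWithinAt) (fun y hy => (hφ'' y ?_).hasDerivWithinAt)
    fun y hy => ?_
  · exact ContinuousOn.div (by fun_prop) (by fun_prop) fun y (hy : 0 ≤ y) => by positivity
  all_goals rw [interior_Ici, mem_Ioi] at hy
  · positivity
  · positivity
  · positivity

lemma convexOn_sub_mul_exp_neg_div_one_add (c b : ℝ) {w : ℝ} (hw : 0 < w) :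
    ConvexOn ℝ (Iic b) fun ε => (b - ε) * exp (-((c + ε) * w)) / (1 + (b - ε) * w) := by
  let y : ℝ →ᵃ[ℝ] ℝ :=
    { toFun := fun ε => (b - ε) * w
      linear := -w • LinearMap.id
      map_vadd' := fun ε v => by
        simp only [vadd_eq_add, LinearMap.smul_apply, LinearMap.id_coe, id_eq, smul_eq_mul]
        ring }
  have hy : y ⁻¹' Ici 0 = Iic b := by
    ext ε
    simp [y, mul_nonneg_iff_of_pos_right hw]
  have hφ := (convexOn_mul_exp_div_one_add.comp_affineMap y).smul
    (by positivity : 0 ≤ exp (-((c + b) * w)) / w)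
  rw [hy] at hφ
  refine hφ.congr fun ε (hε : ε ≤ b) => ?_
  have h1 : 0 < 1 + (b - ε) * w := by nlinarith
  have hexp : exp (-((c + ε) * w)) = exp (-((c + b) * w)) * exp ((b - ε) * w) := by
    rw [← exp_add]; ring_nf
  simp only [Function.comp, smul_eq_mul, hexp, y, AffineMap.coe_mk]
  field_simp

lemma integrableOn_mul_exp_neg_div_one_add {p x : ℝ} (hp : 0 < p) (hx : 0 ≤ x) :
    IntegrableOn (fun w => x * exp (-(p * w)) / (1 + x * w)) (Ioi 0) := by
  refine ((exp_neg_integrableOn_Ioi 0 hp).const_mul x).mono'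
    (by fun_prop : Measurable _).aestronglyMeasurable
    ((ae_restrict_mem measurableSet_Ioi).mono fun w (hw : 0 < w) => ?_)
  have hxw : 1 ≤ 1 + x * w := by nlinarith
  rw [norm_of_nonneg (by positivity), neg_mul]
  exact div_le_self (by positivity) hxw

lemma norm_exp_neg_mul_log_one_add_div_le {s t : ℝ} (hs : 0 < s) (ht : 0 ≤ t) :
    ‖exp (-t) * log (1 + t / s)‖ ≤ s⁻¹ * (t * exp (-t)) := by
  have hts : 0 ≤ t / s := div_nonneg ht hs.le
  rw [norm_of_nonneg (mul_nonneg (exp_pos _).le (log_nonneg (by linarith)))]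
  calc exp (-t) * log (1 + t / s) ≤ exp (-t) * (t / s) := by
        gcongr
        linarith [log_le_sub_one_of_pos (by linarith : 0 < 1 + t / s)]
    _ = s⁻¹ * (t * exp (-t)) := by ring

lemma integrableOn_exp_neg_mul_log_one_add_div {s : ℝ} (hs : 0 < s) :
    IntegrableOn (fun t => exp (-t) * log (1 + t / s)) (Ioi 0) := by
  have hΓ : IntegrableOn (fun t => t * exp (-t)) (Ioi 0) := by
    refine (GammaIntegral_convergent two_pos).congr_fun (fun t (ht : 0 < t) => ?_)
      measurableSet_Ioi
    norm_num [mul_comm]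
  refine (hΓ.const_mul s⁻¹).mono' ?_ ((ae_restrict_mem measurableSet_Ioi).mono
    fun t (ht : 0 < t) => norm_exp_neg_mul_log_one_add_div_le hs ht.le)
  refine (ContinuousOn.mul (by fun_prop) (ContinuousOn.log (by fun_prop) fun t (ht : 0 < t) =>
    ?_)).aestronglyMeasurable measurableSet_Ioi
  positivity

lemma integrableOn_exp_neg_div_add {s : ℝ} (hs : 0 < s) :
    IntegrableOn (fun t => exp (-t) / (t + s)) (Ioi 0) := by
  refine ((exp_neg_integrableOn_Ioi 0 one_pos).const_mul s⁻¹).mono'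
    (by fun_prop : Measurable _).aestronglyMeasurable
    ((ae_restrict_mem measurableSet_Ioi).mono fun t (ht : 0 < t) => ?_)
  rw [norm_of_nonneg (by positivity), neg_one_mul, div_eq_mul_inv, mul_comm]
  gcongr
  linarith

lemma integral_exp_neg_mul_log_one_add_div {s : ℝ} (hs : 0 < s) :
    ∫ t in Ioi 0, exp (-t) * log (1 + t / s) = ∫ t in Ioi 0, exp (-t) / (t + s) := by
  have hint_log := integrableOn_exp_neg_mul_log_one_add_div hs
  have hint_inv := integrableOn_exp_neg_div_add hs
  have hderiv : ∀ t ∈ Ici (0 : ℝ), HasDerivAt (fun t => -(exp (-t) * log (1 + t / s)))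
      (exp (-t) * log (1 + t / s) - exp (-t) / (t + s)) t := by
    intro t (ht : 0 ≤ t)
    have hpos : 0 < 1 + t / s := by positivity
    refine (((hasDerivAt_neg t).exp.mul
      ((((hasDerivAt_id t).div_const s).const_add 1).log hpos.ne')).neg).congr_deriv ?_
    simp only [id]
    field_simp
    ring
  have hlim : Tendsto (fun t => -(exp (-t) * log (1 + t / s))) atTop (𝓝 0) := by
    have hdecay : Tendsto (fun t => s⁻¹ * (t * exp (-t))) atTop (𝓝 0) := by
      simpa using (tendsto_pow_mul_exp_neg_atTop_nhds_zero 1).const_mul s⁻¹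
    rw [← neg_zero]
    refine (squeeze_zero_norm' ?_ hdecay).neg
    filter_upwards [eventually_ge_atTop 0] with t ht
    simpa using norm_exp_neg_mul_log_one_add_div_le hs ht
  have hFTC := integral_Ioi_of_hasDerivAt_of_tendsto' hderiv (hint_log.sub hint_inv) hlim
  rw [integral_sub hint_log hint_inv] at hFTC
  exact sub_eq_zero.mp (by simpa using hFTC)

lemma integral_exp_neg_mul_log_one_add_mul_div {p x : ℝ} (hp : 0 < p) (hx : 0 ≤ x) :
    ∫ t in Ioi 0, exp (-t) * log (1 + x * t / p) =
      ∫ w in Ioi 0, x * exp (-(p * w)) / (1 + x * w) := by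
  rcases hx.eq_or_lt with rfl | hx
  · simp
  have hkernel : EqOn (fun w => x * exp (-(p * w)) / (1 + x * w))
      (fun w => p * (exp (-(p * w)) / (p * w + p / x))) (Ioi 0) := fun w (hw : 0 < w) => by
    field_simp
    ring
  have hsub := integral_comp_mul_left_Ioi (fun t => exp (-t) / (t + p / x)) 0 hp
  simp only [mul_zero, smul_eq_mul] at hsub
  have harg : ∀ t, x * t / p = t / (p / x) := fun t => by field_simp
  simp_rw [harg]
  rw [integral_exp_neg_mul_log_one_add_div (by positivity),
    setIntegral_congr_fun measurableSet_Ioi hkernel, integral_const_mul, hsub, ← mul_assoc,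
    mul_inv_cancel₀ hp.ne', one_mul]

theorem convexOn_exp_log_integral_general (a b : ℝ) (ha : 0 < a) :
    ConvexOn ℝ (Set.Icc 0 b)
      (fun ε : ℝ => ∫ t in Set.Ioi (0 : ℝ),
        Real.exp (-t) * Real.log (1 + a * (b - ε) * t / (1 + a * ε))) := by
  set K : ℝ → ℝ → ℝ := fun ε w => (b - ε) * exp (-((a⁻¹ + ε) * w)) / (1 + (b - ε) * w)
  have hp : ∀ ε ∈ Icc 0 b, 0 < a⁻¹ + ε := fun ε hε => add_pos_of_pos_of_nonneg (inv_pos.2 ha) hε.1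
  have hK : ConvexOn ℝ (Icc 0 b) fun ε => ∫ w in Ioi 0, K ε w :=
    ConvexOn.integral (convex_Icc 0 b)
      ((ae_restrict_mem measurableSet_Ioi).mono fun w hw =>
        (convexOn_sub_mul_exp_neg_div_one_add a⁻¹ b hw).subset Icc_subset_Iic_self
          (convex_Icc 0 b))
      fun ε hε => integrableOn_mul_exp_neg_div_one_add (hp ε hε) (sub_nonneg.2 hε.2)
  refine hK.congr fun ε hε => ?_
  have harg : ∀ t, a * (b - ε) * t / (1 + a * ε) = (b - ε) * t / (a⁻¹ + ε) := fun t => by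
    field_simp
  simp only [K, harg, integral_exp_neg_mul_log_one_add_mul_div (hp ε hε) (sub_nonneg.2 hε.2)]

/-- For reals `a > 0`, `b > 0`, the function
`f(ε) = ∫_0^∞ e^{-t} log (1 + a (b − ε) t / (1 + a ε)) dt` is convex on `[0, b]`. -/
theorem convexOn_exp_log_integral (a b : ℝ) (ha : 0 < a) (hb : 0 < b) :
    ConvexOn ℝ (Set.Icc 0 b)
      (fun ε : ℝ => ∫ t in Set.Ioi (0 : ℝ),
        Real.exp (-t) * Real.log (1 + a * (b - ε) * t / (1 + a * ε))) :=
  convexOn_exp_log_integral_general a b ha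
end

section
/- Let C be an N×N diagonal complex matrix with nonnegative real diagonal entries c_0,…,c_{N−1}, let Δ be a k×k Hermitian positive semidefinite complex matrix, let D ∈ ℂ^k (viewed as a k×1 matrix), and let p ≥ 0 be real. Then the matrix p·Δ⊗C + I_{kN} is invertible, and the N×N matrix C − p · (D⊗C)† (p·Δ⊗C + I_{kN})^{-1} (D⊗C) is diagonal, with l-th diagonal entry equal to c_l − p · c_l² · D† (p·c_l·Δ + I_k)^{-1} D. -/
/-!
Because `C = diagonal c`, every Kronecker product `A ⊗ₖ C` is block diagonal with blocks
`c l • A`, indexed by the column `l` of `C`. So `p • (Δ ⊗ₖ C) + 1` is block diagonal with the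
positive definite blocks `(p c_l) • Δ + 1`, its inverse is block diagonal with the inverse blocks,
and the whole product `(D ⊗ₖ C)ᴴ (p • (Δ ⊗ₖ C) + 1)⁻¹ (D ⊗ₖ C)` is block diagonal with `1 × 1`
blocks `c_l² D† (p c_l Δ + 1)⁻¹ D`.
-/

open Matrix Kronecker ComplexOrder

namespace Matrix

section BlockDiagonal

variable {m n o α : Type*} [Fintype m] [DecidableEq m] [Fintype o] [DecidableEq o]

theorem isUnit_blockDiagonal [CommRing α] {M : o → Matrix m m α} (hM : ∀ i, IsUnit (M i)) :
    IsUnit (blockDiagonal M) :=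
  (Pi.isUnit_iff.mpr hM).map (blockDiagonalRingHom m o α)

theorem inv_blockDiagonal [CommRing α] {M : o → Matrix m m α} (hM : ∀ i, IsUnit (M i)) :
    (blockDiagonal M)⁻¹ = blockDiagonal fun i => (M i)⁻¹ := by
  refine inv_eq_right_inv ?_
  rw [← blockDiagonal_mul, ← blockDiagonal_one]
  congr 1
  funext i
  exact mul_nonsing_inv _ ((isUnit_iff_isUnit_det _).mp (hM i))

theorem conjTranspose_blockDiagonal_mul_inv_mul [Fintype n] [CommRing α] [StarRing α]
    (X : o → Matrix m n α) {M : o → Matrix m m α} (hM : ∀ i, IsUnit (M i)) :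
    (blockDiagonal X)ᴴ * (blockDiagonal M)⁻¹ * blockDiagonal X =
      blockDiagonal fun i => (X i)ᴴ * (M i)⁻¹ * X i := by
  rw [inv_blockDiagonal hM, blockDiagonal_conjTranspose, ← blockDiagonal_mul,
    ← blockDiagonal_mul]

end BlockDiagonal

section Kronecker

variable {m n o ι α : Type*} [DecidableEq o]

theorem smul_kronecker_diagonal_add_one [Fintype m] [DecidableEq m] [CommSemiring α]
    (p : α) (Δ : Matrix m m α) (c : o → α) :
    p • (Δ ⊗ₖ diagonal c) + 1 = blockDiagonal fun l => (p * c l) • Δ + 1 := by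
  rw [kronecker_diagonal, ← blockDiagonal_one, ← blockDiagonal_smul, ← blockDiagonal_add]
  congr 1
  funext l
  simp only [Pi.add_apply, Pi.smul_apply, Pi.one_apply, op_smul_eq_smul, smul_smul]

theorem replicateCol_kronecker_diagonal [CommMonoidWithZero α] (v : m → α) (c : o → α) :
    replicateCol ι v ⊗ₖ diagonal c = blockDiagonal fun l => replicateCol ι (c l • v) := by
  simp only [kronecker_diagonal, op_smul_eq_smul, replicateCol_smul]

end Kronecker

theorem conjTranspose_replicateCol_mul_mul_replicateCol_apply {m ι α : Type*} [Fintype m]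
    [NonUnitalSemiring α] [Star α] (v w : m → α) (M : Matrix m m α) (i j : ι) :
    ((replicateCol ι v)ᴴ * M * replicateCol ι w) i j = star v ⬝ᵥ M *ᵥ w := by
  rw [Matrix.mul_assoc, ← replicateCol_mulVec, conjTranspose_replicateCol,
    replicateRow_mul_replicateCol_apply]

end Matrix

/-- Let `C` be an `N × N` diagonal complex matrix with nonnegative real diagonal entries `c l`,
`Δ` a `k × k` Hermitian positive semidefinite complex matrix, `D ∈ ℂ^k` (viewed as a `k × 1`
column), and `p ≥ 0`.  Then `p·Δ⊗C + I` is invertible, and the `N × N` matrix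
`C − p (D⊗C)† (p·Δ⊗C + I)⁻¹ (D⊗C)` is diagonal with `l`-th diagonal entry
`c l − p (c l)² D† (p c_l Δ + I)⁻¹ D`. -/
theorem kronecker_estimation_error_diagonal (k N : ℕ) (c : Fin N → ℝ) (hc : ∀ l, 0 ≤ c l)
    (C : Matrix (Fin N) (Fin N) ℂ) (hC : C = Matrix.diagonal fun l => (c l : ℂ))
    (Δ : Matrix (Fin k) (Fin k) ℂ) (hΔ : Δ.PosSemidef) (D : Fin k → ℂ) (p : ℝ) (hp : 0 ≤ p) :
    IsUnit ((p : ℂ) • (Δ ⊗ₖ C) + 1) ∧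
      ∀ l l' : Fin N,
        C l l' - (p : ℂ) *
            (((Matrix.of fun i (_ : Fin 1) => D i) ⊗ₖ C)ᴴ * ((p : ℂ) • (Δ ⊗ₖ C) + 1)⁻¹
                * ((Matrix.of fun i (_ : Fin 1) => D i) ⊗ₖ C)) (0, l) (0, l')
          = if l = l' then
              (c l : ℂ) - (p : ℂ) * (c l : ℂ) ^ 2 *
                (star D ⬝ᵥ (((p * c l : ℝ) : ℂ) • Δ + 1)⁻¹ *ᵥ D)
            else 0 := by
  have hblock : ∀ l, IsUnit (((p * c l : ℝ) : ℂ) • Δ + 1) := fun l =>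
    (PosDef.posSemidef_add (hΔ.smul (Complex.zero_le_real.mpr (mul_nonneg hp (hc l))))
      PosDef.one).isUnit
  have hM : (p : ℂ) • (Δ ⊗ₖ C) + 1 = blockDiagonal fun l => ((p * c l : ℝ) : ℂ) • Δ + 1 := by
    simp only [hC, smul_kronecker_diagonal_add_one, Complex.ofReal_mul]
  refine ⟨hM ▸ isUnit_blockDiagonal hblock, fun l l' => ?_⟩
  rw [show (Matrix.of fun i (_ : Fin 1) => D i) = replicateCol (Fin 1) D from rfl, hM, hC,
    replicateCol_kronecker_diagonal, conjTranspose_blockDiagonal_mul_inv_mul _ hblock,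
    blockDiagonal_apply', diagonal_apply]
  split_ifs with h
  · subst h
    rw [conjTranspose_replicateCol_mul_mul_replicateCol_apply, star_smul, mulVec_smul,
      smul_dotProduct, dotProduct_smul, Complex.star_def, Complex.conj_ofReal, smul_eq_mul,
      smul_eq_mul]
    ring
  · simp
end

section
/- Let Δ be a k×k Hermitian positive semidefinite complex matrix and D ∈ ℂ^k such that Δ − D D† is positive semidefinite, and let c > 0 and p ≥ 0 be reals. Then ε := c − p c² D† (p c Δ + I)^{-1} D is a positive real number and ε^{-1} = c^{-1} + p · D† (p c (Δ − D D†) + I)^{-1} D. -/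
/-!
With `a = p c`, `A = a Δ + 1` and `B = a (Δ - D D†) + 1 = A - a D D†`, both `B` and `A = B + a D D†`
are positive definite. Sherman–Morrison gives `B (A⁻¹ D) = (1 - a s) D` for `s = D† A⁻¹ D`, hence
`(1 - a s) t = s` for `t = D† B⁻¹ D`. As `s, t ≥ 0`, this forces `1 - a s > 0`, so `ε = c (1 - a s) > 0`,
and `ε⁻¹ = c⁻¹ + p t` is the scalar identity `(1 - a s)(1 + a t) = 1`.
-/

open Matrix ComplexOrder

namespace Matrix

variable {n R : Type*} [Fintype n] [DecidableEq n] [CommRing R]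

theorem sub_smul_vecMulVec_mulVec_inv_mulVec {A : Matrix n n R} (hA : IsUnit A.det) (r : R)
    (x y : n → R) :
    (A - r • vecMulVec x y) *ᵥ (A⁻¹ *ᵥ x) = (1 - r * (y ⬝ᵥ A⁻¹ *ᵥ x)) • x := by
  rw [sub_mulVec, mulVec_mulVec, mul_nonsing_inv _ hA, one_mulVec, smul_mulVec,
    vecMulVec_mulVec, op_smul_eq_smul, smul_smul, sub_smul, one_smul]

theorem smul_inv_sub_smul_vecMulVec_mulVec {A : Matrix n n R} (hA : IsUnit A.det) (r : R)
    (x y : n → R) (hB : IsUnit (A - r • vecMulVec x y).det) :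
    (1 - r * (y ⬝ᵥ A⁻¹ *ᵥ x)) • ((A - r • vecMulVec x y)⁻¹ *ᵥ x) = A⁻¹ *ᵥ x := by
  rw [← mulVec_smul, ← sub_smul_vecMulVec_mulVec_inv_mulVec hA, mulVec_mulVec,
    nonsing_inv_mul _ hB, one_mulVec]

theorem mul_dotProduct_inv_sub_smul_vecMulVec_mulVec {A : Matrix n n R} (hA : IsUnit A.det)
    (r : R) (x y : n → R) (hB : IsUnit (A - r • vecMulVec x y).det) :
    (1 - r * (y ⬝ᵥ A⁻¹ *ᵥ x)) * (y ⬝ᵥ (A - r • vecMulVec x y)⁻¹ *ᵥ x) = y ⬝ᵥ A⁻¹ *ᵥ x := by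
  rw [← smul_eq_mul, ← dotProduct_smul, smul_inv_sub_smul_vecMulVec_mulVec hA r x y hB]

end Matrix

theorem Matrix.PosSemidef.exists_ofReal_eq_dotProduct_mulVec {n : Type*} [Fintype n]
    {M : Matrix n n ℂ} (hM : M.PosSemidef) (x : n → ℂ) :
    ∃ s : ℝ, 0 ≤ s ∧ (s : ℂ) = star x ⬝ᵥ M *ᵥ x :=
  RCLike.nonneg_iff_exists_ofReal.mp (hM.dotProduct_mulVec_nonneg x)

theorem estimation_error_inverse_formula_general (k : ℕ) (Δ : Matrix (Fin k) (Fin k) ℂ)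
    (D : Fin k → ℂ) (hΔD : (Δ - Matrix.vecMulVec D (star D)).PosSemidef)
    (c p : ℝ) (hc : 0 < c) (hp : 0 ≤ p) :
    ∃ ε : ℝ, 0 < ε ∧
      (ε : ℂ) = (c : ℂ) - (p : ℂ) * (c : ℂ) ^ 2 *
          (star D ⬝ᵥ (((p * c : ℝ) : ℂ) • Δ + 1)⁻¹ *ᵥ D) ∧
      ((ε⁻¹ : ℝ) : ℂ) = (c⁻¹ : ℝ) + (p : ℂ) *
          (star D ⬝ᵥ (((p * c : ℝ) : ℂ) • (Δ - Matrix.vecMulVec D (star D)) + 1)⁻¹ *ᵥ D) := by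
  set V := vecMulVec D (star D)
  set A := ((p * c : ℝ) : ℂ) • Δ + 1
  have hpc : (0 : ℂ) ≤ ((p * c : ℝ) : ℂ) := Complex.zero_le_real.mpr (by positivity)
  have hB : (((p * c : ℝ) : ℂ) • (Δ - V) + 1).PosDef :=
    PosDef.posSemidef_add (hΔD.smul hpc) PosDef.one
  have hBA : ((p * c : ℝ) : ℂ) • (Δ - V) + 1 = A - ((p * c : ℝ) : ℂ) • V := by
    rw [smul_sub, sub_add_eq_add_sub]
  have hA : A.PosDef := by
    rw [← sub_add_cancel A (((p * c : ℝ) : ℂ) • V), ← hBA]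
    exact hB.add_posSemidef ((posSemidef_vecMulVec_self_star D).smul hpc)
  obtain ⟨s, hs0, hs⟩ := hA.posSemidef.inv.exists_ofReal_eq_dotProduct_mulVec D
  obtain ⟨t, ht0, ht⟩ := hB.posSemidef.inv.exists_ofReal_eq_dotProduct_mulVec D
  have hst : (1 - p * c * s) * t = s := by
    have := mul_dotProduct_inv_sub_smul_vecMulVec_mulVec ((isUnit_iff_isUnit_det _).mp hA.isUnit)
      _ D (star D) ((isUnit_iff_isUnit_det _).mp (hBA ▸ hB.isUnit))
    rw [← hBA, ← hs, ← ht] at this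
    exact_mod_cast this
  have hpos : 0 < 1 - p * c * s := by
    rcases hs0.eq_or_lt with hs0 | hs0
    · simp [← hs0]
    · exact pos_of_mul_pos_left (by rwa [hst]) ht0
  refine ⟨c * (1 - p * c * s), by positivity, ?_, ?_⟩
  · rw [← hs]; push_cast; ring
  · have hinv : (c * (1 - p * c * s))⁻¹ = c⁻¹ + p * t := by
      refine inv_eq_of_mul_eq_one_right ?_
      field_simp
      linear_combination (p * c) * hst
    rw [← ht, hinv]; push_cast; ring

/-- Let `Δ` be a `k × k` Hermitian positive semidefinite complex matrix and `D ∈ ℂ^k` with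
`Δ − D D†` positive semidefinite, and let `c > 0`, `p ≥ 0` be reals.  Then
`ε := c − p c² D† (p c Δ + I)⁻¹ D` is a positive real and
`ε⁻¹ = c⁻¹ + p · D† (p c (Δ − D D†) + I)⁻¹ D`. -/
theorem estimation_error_inverse_formula (k : ℕ) (Δ : Matrix (Fin k) (Fin k) ℂ)
    (hΔ : Δ.PosSemidef) (D : Fin k → ℂ) (hΔD : (Δ - Matrix.vecMulVec D (star D)).PosSemidef)
    (c p : ℝ) (hc : 0 < c) (hp : 0 ≤ p) :
    ∃ ε : ℝ, 0 < ε ∧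
      (ε : ℂ) = (c : ℂ) - (p : ℂ) * (c : ℂ) ^ 2 *
          (star D ⬝ᵥ (((p * c : ℝ) : ℂ) • Δ + 1)⁻¹ *ᵥ D) ∧
      ((ε⁻¹ : ℝ) : ℂ) = (c⁻¹ : ℝ) + (p : ℂ) *
          (star D ⬝ᵥ (((p * c : ℝ) : ℂ) • (Δ - Matrix.vecMulVec D (star D)) + 1)⁻¹ *ᵥ D) :=
  estimation_error_inverse_formula_general k Δ D hΔD c p hc hp
end

section
/- Let M be a k×k Hermitian positive semidefinite complex matrix, D ∈ ℂ^k, and let p ≥ 0 and λ ≥ 1 be reals. Then (1/λ) · D† (p M + I)^{-1} D ≤ D† (λ p M + I)^{-1} D ≤ D† (p M + I)^{-1} D, where all three quantities are nonnegative reals. -/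
/-!
In the Loewner order, `p M + 1 ≤ λ p M + 1 ≤ λ (p M + 1)`. Inversion reverses this order on
positive definite matrices, and `X ↦ D† X D` is monotone, which gives both inequalities; the
quadratic forms are nonnegative reals because the inverses are positive definite.
-/

open Matrix ComplexOrder
open scoped Matrix.Norms.L2Operator MatrixOrder

namespace Matrix

variable {n : Type*}

lemma star_dotProduct_mulVec_le_of_le [Fintype n] {𝕜 : Type*} [RCLike 𝕜] {A B : Matrix n n 𝕜}
    (hAB : A ≤ B) (x : n → 𝕜) : star x ⬝ᵥ A *ᵥ x ≤ star x ⬝ᵥ B *ᵥ x := by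
  have := (le_iff.mp hAB).dotProduct_mulVec_nonneg x
  rwa [sub_mulVec, dotProduct_sub, sub_nonneg] at this

section Inverse

variable [Fintype n] [DecidableEq n] {A B : Matrix n n ℂ}

lemma PosDef.inv_le_inv_of_le (hA : A.PosDef) (hAB : A ≤ B) : B⁻¹ ≤ A⁻¹ := by
  rw [nonsing_inv_eq_ringInverse, nonsing_inv_eq_ringInverse]
  exact CStarAlgebra.ringInverse_le_ringInverse hAB (isStrictlyPositive_iff_posDef.mpr hA)

lemma PosDef.inv_smul_le_inv_of_le_smul (hA : A.PosDef) (hB : B.PosDef) {c : ℝ} (hc : 0 < c)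
    (hBA : B ≤ (c : ℂ) • A) : (c : ℂ)⁻¹ • A⁻¹ ≤ B⁻¹ := by
  have hc' : (c : ℂ) ≠ 0 := Complex.ofReal_ne_zero.mpr hc.ne'
  have hinv : ((c : ℂ) • A)⁻¹ = (c : ℂ)⁻¹ • A⁻¹ := inv_eq_left_inv <| by
    rw [smul_mul_smul_comm, inv_mul_cancel₀ hc',
      nonsing_inv_mul _ ((isUnit_iff_isUnit_det A).mp hA.isUnit), one_smul]
  rw [← hinv]
  exact hB.inv_le_inv_of_le hBA

end Inverse

section Resolvent

variable [DecidableEq n] {M : Matrix n n ℂ}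

lemma PosSemidef.posDef_smul_add_one (hM : M.PosSemidef) {c : ℝ} (hc : 0 ≤ c) :
    ((c : ℂ) • M + 1).PosDef :=
  PosDef.posSemidef_add (hM.smul (Complex.zero_le_real.mpr hc)) PosDef.one

lemma PosSemidef.smul_add_one_le_smul_add_one (hM : M.PosSemidef) {c d : ℝ} (hcd : c ≤ d) :
    (c : ℂ) • M + 1 ≤ (d : ℂ) • M + 1 := by
  rw [le_iff, show (d : ℂ) • M + 1 - ((c : ℂ) • M + 1) = ((d - c : ℝ) : ℂ) • M by
    push_cast; module]
  exact hM.smul (Complex.zero_le_real.mpr (sub_nonneg.mpr hcd))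

lemma mul_smul_add_one_le_smul_smul_add_one (M : Matrix n n ℂ) {c l : ℝ} (hl : 1 ≤ l) :
    ((l * c : ℝ) : ℂ) • M + 1 ≤ (l : ℂ) • ((c : ℂ) • M + 1) := by
  rw [le_iff, show (l : ℂ) • ((c : ℂ) • M + 1) - (((l * c : ℝ) : ℂ) • M + 1)
      = ((l - 1 : ℝ) : ℂ) • 1 by push_cast; module]
  exact PosSemidef.one.smul (Complex.zero_le_real.mpr (sub_nonneg.mpr hl))

end Resolvent

end Matrix

/-- Let `M` be a `k × k` Hermitian positive semidefinite complex matrix, `D ∈ ℂ^k`, `p ≥ 0`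
and `λ ≥ 1`.  Then `(1/λ) D† (p M + I)⁻¹ D ≤ D† (λ p M + I)⁻¹ D ≤ D† (p M + I)⁻¹ D`, all
three quantities being nonnegative reals. -/
theorem quadratic_form_resolvent_scaling (k : ℕ) (M : Matrix (Fin k) (Fin k) ℂ)
    (hM : M.PosSemidef) (D : Fin k → ℂ) (p l : ℝ) (hp : 0 ≤ p) (hl : 1 ≤ l) :
    (star D ⬝ᵥ ((p : ℂ) • M + 1)⁻¹ *ᵥ D).im = 0 ∧
    (star D ⬝ᵥ (((l * p : ℝ) : ℂ) • M + 1)⁻¹ *ᵥ D).im = 0 ∧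
    0 ≤ (star D ⬝ᵥ ((p : ℂ) • M + 1)⁻¹ *ᵥ D).re ∧
    0 ≤ (star D ⬝ᵥ (((l * p : ℝ) : ℂ) • M + 1)⁻¹ *ᵥ D).re ∧
    (1 / l) * (star D ⬝ᵥ ((p : ℂ) • M + 1)⁻¹ *ᵥ D).re
      ≤ (star D ⬝ᵥ (((l * p : ℝ) : ℂ) • M + 1)⁻¹ *ᵥ D).re ∧
    (star D ⬝ᵥ (((l * p : ℝ) : ℂ) • M + 1)⁻¹ *ᵥ D).re
      ≤ (star D ⬝ᵥ ((p : ℂ) • M + 1)⁻¹ *ᵥ D).re := by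
  have hl₀ : 0 < l := zero_lt_one.trans_le hl
  have hA := hM.posDef_smul_add_one hp
  have hB := hM.posDef_smul_add_one (mul_nonneg hl₀.le hp)
  obtain ⟨hA_re, hA_im⟩ := Complex.nonneg_iff.mp (hA.inv.posSemidef.dotProduct_mulVec_nonneg D)
  obtain ⟨hB_re, hB_im⟩ := Complex.nonneg_iff.mp (hB.inv.posSemidef.dotProduct_mulVec_nonneg D)
  have hBA := Complex.le_def.mp <| star_dotProduct_mulVec_le_of_le
    (hA.inv_le_inv_of_le (hM.smul_add_one_le_smul_add_one (le_mul_of_one_le_left hp hl))) D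
  have hAB := Complex.le_def.mp <| star_dotProduct_mulVec_le_of_le
    (hA.inv_smul_le_inv_of_le_smul hB hl₀ (mul_smul_add_one_le_smul_smul_add_one M hl)) D
  rw [smul_mulVec, dotProduct_smul, smul_eq_mul, ← Complex.ofReal_inv,
    Complex.re_ofReal_mul] at hAB
  exact ⟨hA_im.symm, hB_im.symm, hA_re, hB_re, one_div l ▸ hAB.1, hBA.1⟩
end

section
/- For every real η > 0, the exponential integral satisfies ∫_η^∞ (e^{-t}/t) dt < e^{-η} · log(1 + 1/η). -/
/-!
With `F t = e^{-t} log (1 + 1/t)` one has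
`-F' t = e^{-t} (log (1 + 1/t) + 1/(t(t+1)))`, and since `log (1 + 1/t) > 1/(t+1)` this exceeds
`e^{-t}/t = e^{-t} (1/(t+1) + 1/(t(t+1)))`. Integrating over `(η, ∞)`, where `F` tends to `0`,
gives `E₁(η) < F η`.
-/

open Real MeasureTheory Set Filter Topology

theorem MeasureTheory.setIntegral_lt_setIntegral_of_forall_lt {X : Type*} [MeasurableSpace X]
    {μ : Measure X} {s : Set X} {f g : X → ℝ} (hs : MeasurableSet s) (hμs : μ s ≠ 0)
    (hf : IntegrableOn f s μ) (hg : IntegrableOn g s μ) (hlt : ∀ x ∈ s, f x < g x) :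
    ∫ x in s, f x ∂μ < ∫ x in s, g x ∂μ := by
  have hpos : ∀ x ∈ s, 0 < (g - f) x := fun x hx => sub_pos.2 (hlt x hx)
  have hnonneg : 0 ≤ᵐ[μ.restrict s] g - f :=
    (ae_restrict_iff' hs).2 (ae_of_all _ fun x hx => (hpos x hx).le)
  rw [← sub_pos, ← integral_sub hg hf, ← Pi.sub_def,
    setIntegral_pos_iff_support_of_nonneg_ae hnonneg (hg.sub hf),
    inter_eq_self_of_subset_right (show s ⊆ (g - f).support from fun x hx => (hpos x hx).ne')]
  exact pos_iff_ne_zero.2 hμs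

namespace Real

theorem one_div_add_one_lt_log_one_add_one_div {t : ℝ} (ht : 0 < t) :
    1 / (t + 1) < log (1 + 1 / t) := by
  have hpos : 0 < t / (t + 1) := by positivity
  have hne : t / (t + 1) ≠ 1 := by
    rw [Ne, div_eq_one_iff_eq (by positivity)]
    linarith
  have key := log_lt_sub_one_of_pos hpos hne
  have hinv : 1 + 1 / t = (t / (t + 1))⁻¹ := by field_simp
  have hsub : t / (t + 1) - 1 = -(1 / (t + 1)) := by field_simp; ring
  rw [hinv, log_inv]
  linarith

theorem hasDerivAt_neg_exp_neg_mul_log_one_add_one_div {t : ℝ} (ht : 0 < t) :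
    HasDerivAt (fun t => -(exp (-t) * log (1 + 1 / t)))
      (exp (-t) * (log (1 + 1 / t) + 1 / (t * (t + 1)))) t := by
  have hexp : HasDerivAt (fun t => exp (-t)) (-exp (-t)) t := by
    simpa using (hasDerivAt_neg t).exp
  have hlog : HasDerivAt (fun t => log (1 + 1 / t)) (-(t ^ 2)⁻¹ / (1 + 1 / t)) t := by
    simpa only [one_div] using ((hasDerivAt_inv ht.ne').const_add 1).log (by positivity)
  refine (hexp.mul hlog).neg.congr_deriv ?_
  field_simp
  ring

theorem tendsto_exp_neg_mul_log_one_add_one_div :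
    Tendsto (fun t => exp (-t) * log (1 + 1 / t)) atTop (𝓝 0) := by
  have hlog : Tendsto (fun t : ℝ => log (1 + 1 / t)) atTop (𝓝 0) := by
    have h : Tendsto (fun t : ℝ => 1 + 1 / t) atTop (𝓝 1) := by
      simpa using tendsto_inv_atTop_zero.const_add (1 : ℝ)
    simpa [Function.comp_def] using (continuousAt_log one_ne_zero).tendsto.comp h
  simpa using tendsto_exp_neg_atTop_nhds_zero.mul hlog

theorem exp_neg_div_lt {t : ℝ} (ht : 0 < t) :
    exp (-t) / t < exp (-t) * (log (1 + 1 / t) + 1 / (t * (t + 1))) :=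
  calc exp (-t) / t = exp (-t) * (1 / (t + 1) + 1 / (t * (t + 1))) := by field_simp
    _ < exp (-t) * (log (1 + 1 / t) + 1 / (t * (t + 1))) := by
      gcongr
      exact one_div_add_one_lt_log_one_add_one_div ht

theorem integrableOn_exp_neg_div_Ioi {a : ℝ} (ha : 0 < a) :
    IntegrableOn (fun t => exp (-t) / t) (Ioi a) := by
  refine ((integrableOn_exp_neg_Ioi a).const_mul a⁻¹).mono' ?_ ?_
  · exact (ContinuousOn.div (by fun_prop) continuousOn_id fun x hx => (ha.trans hx).ne')
      |>.aestronglyMeasurable measurableSet_Ioi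
  · refine (ae_restrict_iff' measurableSet_Ioi).2 (ae_of_all _ fun x hx => ?_)
    have hx0 : 0 < x := ha.trans hx
    rw [norm_of_nonneg (by positivity), div_eq_mul_inv, mul_comm]
    gcongr
    exact le_of_lt hx

end Real

/-- For every real `η > 0`, the exponential integral satisfies
`∫_η^∞ e^{-t}/t dt < e^{-η} log (1 + 1/η)`. -/
theorem exponential_integral_lt (η : ℝ) (hη : 0 < η) :
    ∫ t in Set.Ioi η, Real.exp (-t) / t < Real.exp (-η) * Real.log (1 + 1 / η) := by
  set G : ℝ → ℝ := fun t => exp (-t) * (log (1 + 1 / t) + 1 / (t * (t + 1)))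
  have hderiv : ∀ x ∈ Ici η, HasDerivAt (fun t => -(exp (-t) * log (1 + 1 / t))) (G x) x :=
    fun x hx => hasDerivAt_neg_exp_neg_mul_log_one_add_one_div (hη.trans_le hx)
  have hG_pos : ∀ x ∈ Ioi η, 0 < G x := fun x hx =>
    (div_pos (exp_pos _) (hη.trans hx)).trans (exp_neg_div_lt (hη.trans hx))
  have hlim := tendsto_exp_neg_mul_log_one_add_one_div.neg
  rw [neg_zero] at hlim
  have hG_int := integrableOn_Ioi_deriv_of_nonneg' hderiv (fun x hx => (hG_pos x hx).le) hlim
  have hG_integral : ∫ t in Ioi η, G t = exp (-η) * log (1 + 1 / η) := by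
    simpa using integral_Ioi_of_hasDerivAt_of_nonneg' hderiv (fun x hx => (hG_pos x hx).le) hlim
  calc ∫ t in Ioi η, exp (-t) / t < ∫ t in Ioi η, G t :=
        setIntegral_lt_setIntegral_of_forall_lt measurableSet_Ioi (by simp)
          (integrableOn_exp_neg_div_Ioi hη) hG_int fun x hx => exp_neg_div_lt (hη.trans hx)
    _ = exp (-η) * log (1 + 1 / η) := hG_integral
end

section
/- Let Δ be a k×k Hermitian positive semidefinite complex matrix, P a k×k diagonal matrix with nonnegative real diagonal entries, C₀ an N×N Hermitian positive semidefinite complex matrix with top-left entry c₀₀ = (C₀)_{0,0}, let J₀ = e₀ e₀† be the N×N matrix with a single 1 in position (0,0), and let s ≥ 0 be real. Then the matrix s·(Δ⊗C₀)(P⊗J₀) + I_{kN} is invertible and (P⊗J₀) · ( s·(Δ⊗C₀)(P⊗J₀) + I_{kN} )^{-1} = ( P (I_k + s·c₀₀·Δ P)^{-1} ) ⊗ J₀. -/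
open Matrix Kronecker ComplexOrder

/-!
With `J₀ = single 0 0 1` one has `J₀ C₀ J₀ = c₀₀ • J₀`, so for `K = 1 + s c₀₀ Δ P` the matrix
`(P K⁻¹) ⊗ J₀` times `s (Δ ⊗ C₀)(P ⊗ J₀) + 1` is `(P K⁻¹ K) ⊗ J₀ = P ⊗ J₀`; multiplying on the right
by the inverse gives the formula. Both `K` and `s (Δ ⊗ C₀)(P ⊗ J₀) + 1` have the form `1 + A B`
with `A`, `B` positive semidefinite, and such a matrix is invertible: writing `B = Rᴴ R`,
`det (1 + A Rᴴ R) = det (1 + R A Rᴴ)`, a positive definite matrix.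
-/

namespace Matrix

theorem PosSemidef.isUnit_one_add_mul {𝕜 n : Type*} [RCLike 𝕜] [Fintype n] [DecidableEq n]
    {A B : Matrix n n 𝕜} (hA : A.PosSemidef) (hB : B.PosSemidef) : IsUnit (1 + A * B) := by
  open MatrixOrder in
  obtain ⟨R, rfl⟩ := CStarAlgebra.nonneg_iff_eq_star_mul_self.mp hB.nonneg
  have hpd : (1 + R * A * Rᴴ).PosDef := PosDef.one.add_posSemidef (hA.mul_mul_conjTranspose_same R)
  rw [isUnit_iff_isUnit_det, star_eq_conjTranspose, ← mul_assoc, det_one_add_mul_comm,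
    ← mul_assoc]
  exact hpd.det_pos.ne'.isUnit

theorem single_mul_mul_single_self {R n : Type*} [CommSemiring R] [Fintype n] [DecidableEq n]
    (C : Matrix n n R) (i : n) : single i i 1 * C * single i i 1 = C i i • single i i (1 : R) := by
  rw [single_mul_mul_single, smul_single, one_mul, mul_one, smul_eq_mul, mul_one]

variable {R m n : Type*} [CommRing R] [Fintype m] [DecidableEq m] [Fintype n] [DecidableEq n]

theorem kronecker_single_mul_inv_smul_kronecker_mul_add_one (A D : Matrix m m R)
    (C : Matrix n n R) (i : n) (s : R) (hK : IsUnit (1 + (s * C i i) • (A * D)))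
    (hM : IsUnit (s • ((A ⊗ₖ C) * (D ⊗ₖ single i i 1)) + 1)) :
    (D ⊗ₖ single i i 1) * (s • ((A ⊗ₖ C) * (D ⊗ₖ single i i 1)) + 1)⁻¹ =
      (D * (1 + (s * C i i) • (A * D))⁻¹) ⊗ₖ single i i 1 := by
  set K := 1 + (s * C i i) • (A * D)
  set M := s • ((A ⊗ₖ C) * (D ⊗ₖ single i i 1)) + 1
  have hZM : ((D * K⁻¹) ⊗ₖ single i i 1) * M = D ⊗ₖ single i i 1 := calc
    _ = ((D * K⁻¹) * K) ⊗ₖ single i i 1 := by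
      rw [mul_add, mul_one, mul_smul_comm, ← mul_assoc, ← mul_kronecker_mul, ← mul_kronecker_mul,
        single_mul_mul_single_self, kronecker_smul, smul_smul, ← smul_kronecker, ← add_kronecker]
      simp only [K, mul_add, mul_one, mul_smul_comm, Matrix.mul_assoc, add_comm]
    _ = D ⊗ₖ single i i 1 := by
      rw [nonsing_inv_mul_cancel_right _ _ ((isUnit_iff_isUnit_det K).mp hK)]
  rw [← hZM, mul_nonsing_inv_cancel_right _ _ ((isUnit_iff_isUnit_det M).mp hM)]

end Matrix

/-- Let `Δ` be a `k × k` Hermitian positive semidefinite complex matrix, `P` a `k × k`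
diagonal matrix with nonnegative real diagonal entries, `C₀` an `N × N` Hermitian positive
semidefinite complex matrix with top-left entry `c₀₀ = C₀ 0 0`, `J₀ = e₀ e₀†`, and `s ≥ 0`.
Then `s (Δ⊗C₀)(P⊗J₀) + I` is invertible and
`(P⊗J₀) (s (Δ⊗C₀)(P⊗J₀) + I)⁻¹ = (P (I + s c₀₀ Δ P)⁻¹) ⊗ J₀`. -/
theorem kronecker_single_bin_inverse (k N : ℕ) [NeZero N]
    (Δ : Matrix (Fin k) (Fin k) ℂ) (hΔ : Δ.PosSemidef)
    (P : Fin k → ℝ) (hP : ∀ a, 0 ≤ P a)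
    (C₀ : Matrix (Fin N) (Fin N) ℂ) (hC₀ : C₀.PosSemidef)
    (s : ℝ) (hs : 0 ≤ s) :
    IsUnit ((s : ℂ) • ((Δ ⊗ₖ C₀) * ((Matrix.diagonal fun a => (P a : ℂ))
          ⊗ₖ Matrix.single (0 : Fin N) (0 : Fin N) 1)) + 1) ∧
      ((Matrix.diagonal fun a => (P a : ℂ)) ⊗ₖ Matrix.single (0 : Fin N) (0 : Fin N) 1)
          * ((s : ℂ) • ((Δ ⊗ₖ C₀) * ((Matrix.diagonal fun a => (P a : ℂ))
              ⊗ₖ Matrix.single (0 : Fin N) (0 : Fin N) 1)) + 1)⁻¹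
        = ((Matrix.diagonal fun a => (P a : ℂ))
              * (1 + ((s : ℂ) * C₀ 0 0) • (Δ * Matrix.diagonal fun a => (P a : ℂ)))⁻¹)
            ⊗ₖ Matrix.single (0 : Fin N) (0 : Fin N) 1 := by
  set D := Matrix.diagonal fun a => (P a : ℂ)
  have hs' : 0 ≤ (s : ℂ) := by exact_mod_cast hs
  have hD : D.PosSemidef := posSemidef_diagonal_iff.mpr fun a => by exact_mod_cast hP a
  have hJ : (single (0 : Fin N) 0 (1 : ℂ)).PosSemidef := by
    rw [← diagonal_single]
    exact PosSemidef.diagonal (Pi.single_nonneg.mpr zero_le_one)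
  have hK : IsUnit (1 + ((s : ℂ) * C₀ 0 0) • (Δ * D)) := by
    rw [← smul_mul_assoc]
    exact (hΔ.smul (mul_nonneg hs' hC₀.diag_nonneg)).isUnit_one_add_mul hD
  have hM : IsUnit ((s : ℂ) • ((Δ ⊗ₖ C₀) * (D ⊗ₖ single 0 0 1)) + 1) := by
    rw [add_comm, ← smul_mul_assoc]
    exact ((hΔ.kronecker hC₀).smul hs').isUnit_one_add_mul (hD.kronecker hJ)
  exact ⟨hM, kronecker_single_mul_inv_smul_kronecker_mul_add_one Δ D C₀ 0 s hK hM⟩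
end
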